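/- arXiv:quant-ph/0403176 — 6 statements merged into one kernel-verified Lean document; each statement's English description precedes it below -/
import Mathlib

section
/- Let D ⊆ ℝ^d be compact convex and f : D → ℝ continuous and concave. Then the supremum over all finite ensembles {(x_i, p_i)} with x_i ∈ D, p_i ≥ 0, ∑ p_i = 1 of f(∑ p_i x_i) − ∑ p_i f(x_i) is attained by an ensemble with at most d+1 points. -/
/-!
Lift an ensemble `(pᵢ, xᵢ)` to the point `(∑ pᵢ xᵢ, ∑ pᵢ f xᵢ)` of `E × ℝ`. These points make up
the convex hull `K` of the graph of `f` over `D`, and the objective becomes `z ↦ f z.1 - z.2`.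
By Carathéodory `K` is compact, so the objective has a maximiser `z` on `K`. Moving `z` downwards
increases the objective, so `z` lies on the boundary of `K`. A boundary point of a convex hull in
`E × ℝ` is a convex combination of at most `dim E + 1` points: with `dim E + 2` affinely
independent points and positive weights it would be interior.
-/

open Module Set

theorem exists_fin_sum_smul_eq_of_card_le {M : Type*} [AddCommMonoid M] [Module ℝ M]
    {ι : Type*} [Fintype ι] {N : ℕ} (hN : Fintype.card ι ≤ N) {s : Set M} {w : ι → ℝ}
    (hw : w ∈ stdSimplex ℝ ι) {y : ι → M} (hy : ∀ i, y i ∈ s) :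
    ∃ (w' : Fin N → ℝ) (y' : Fin N → M), w' ∈ stdSimplex ℝ (Fin N) ∧ (∀ j, y' j ∈ s) ∧
      ∑ j, w' j • y' j = ∑ i, w i • y i := by
  obtain ⟨i₀⟩ : Nonempty ι := by
    by_contra hι
    simpa [not_nonempty_iff.mp hι] using hw.2
  obtain ⟨e⟩ : Nonempty (ι ↪ Fin N) := Function.Embedding.nonempty_of_card_le (by simpa using hN)
  set w' : Fin N → ℝ := Function.extend e w 0
  set y' : Fin N → M := Function.extend e y fun _ => y i₀
  have hw'e (i : ι) : w' (e i) = w i := e.injective.extend_apply _ _ _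
  have hy'e (i : ι) : y' (e i) = y i := e.injective.extend_apply _ _ _
  have hw'off (j : Fin N) (hj : j ∉ range e) : w' j = 0 := Function.extend_apply' _ _ _ hj
  have hy'off (j : Fin N) (hj : j ∉ range e) : y' j = y i₀ := Function.extend_apply' _ _ _ hj
  refine ⟨w', y', ⟨fun j => ?_, ?_⟩, fun j => ?_, ?_⟩
  · by_cases hj : j ∈ range e
    · obtain ⟨i, rfl⟩ := hj
      exact (hw'e i).symm ▸ hw.1 i
    · exact (hw'off j hj).ge
  · rw [← hw.2]
    exact (Fintype.sum_of_injective e e.injective w w' hw'off fun i => (hw'e i).symm).symm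
  · by_cases hj : j ∈ range e
    · obtain ⟨i, rfl⟩ := hj
      exact (hy'e i).symm ▸ hy i
    · exact (hy'off j hj).symm ▸ hy i₀
  · refine (Fintype.sum_of_injective e e.injective _ _ (fun j hj => ?_) fun i => ?_).symm
    · rw [hw'off j hj, zero_smul]
    · rw [hw'e, hy'e]

theorem AffineIndependent.card_le_finrank_add_one {k V ι : Type*} [DivisionRing k]
    [AddCommGroup V] [Module k V] [FiniteDimensional k V] [Fintype ι] {y : ι → V}
    (hy : AffineIndependent k y) : Fintype.card ι ≤ finrank k V + 1 :=
  hy.card_le_finrank_succ.trans (Nat.succ_le_succ (Submodule.finrank_le _))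

section ConvexHull

variable {F : Type*} [NormedAddCommGroup F] [NormedSpace ℝ F]

theorem isCompact_convexHull [FiniteDimensional ℝ F] {s : Set F} (hs : IsCompact s) :
    IsCompact (convexHull ℝ s) := by
  have hK : convexHull ℝ s =
      (fun wy : (Fin (finrank ℝ F + 1) → ℝ) × (Fin (finrank ℝ F + 1) → F) =>
        ∑ i, wy.1 i • wy.2 i) '' (stdSimplex ℝ _ ×ˢ univ.pi fun _ => s) := by
    refine Subset.antisymm (fun z hz => ?_) ?_
    · obtain ⟨ι, _, y, w, hys, hind, hw, hw1, rfl⟩ := eq_pos_convex_span_of_mem_convexHull hz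
      obtain ⟨w', y', hw', hy', heq⟩ := exists_fin_sum_smul_eq_of_card_le
        hind.card_le_finrank_add_one ⟨fun i => (hw i).le, hw1⟩ fun i => hys (mem_range_self i)
      exact ⟨(w', y'), ⟨hw', fun j _ => hy' j⟩, heq⟩
    · rintro _ ⟨⟨w, y⟩, ⟨hw, hy⟩, rfl⟩
      exact (convex_convexHull ℝ s).sum_mem (fun i _ => hw.1 i) hw.2
        fun i _ => subset_convexHull ℝ s (hy i (mem_univ i))
  rw [hK]
  exact ((isCompact_stdSimplex ℝ _).prod (isCompact_univ_pi fun _ => hs)).image (by fun_prop)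

theorem AffineBasis.sum_smul_mem_interior_convexHull {ι : Type*} [Fintype ι]
    (b : AffineBasis ι ℝ F) {w : ι → ℝ} (hw : ∀ i, 0 < w i) (hw1 : ∑ i, w i = 1) :
    ∑ i, w i • b i ∈ interior (convexHull ℝ (range b)) := by
  rw [b.interior_convexHull]
  intro i
  rw [← Finset.univ.affineCombination_eq_linear_combination b w hw1,
    b.coord_apply_combination_of_mem (Finset.mem_univ i) hw1]
  exact hw i

theorem exists_fin_sum_smul_eq_of_notMem_interior_convexHull [FiniteDimensional ℝ F]
    {s : Set F} {z : F} {N : ℕ} (hN : finrank ℝ F ≤ N) (hz : z ∈ convexHull ℝ s)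
    (hzi : z ∉ interior (convexHull ℝ s)) :
    ∃ (w : Fin N → ℝ) (y : Fin N → F), w ∈ stdSimplex ℝ (Fin N) ∧ (∀ j, y j ∈ s) ∧
      ∑ j, w j • y j = z := by
  obtain ⟨ι, _, y, w, hys, hind, hw, hw1, rfl⟩ := eq_pos_convex_span_of_mem_convexHull hz
  refine exists_fin_sum_smul_eq_of_card_le ?_ ⟨fun i => (hw i).le, hw1⟩
    fun i => hys (mem_range_self i)
  -- `finrank ℝ F + 1` affinely independent points form an affine basis, making `z` interior.
  refine (Nat.le_of_lt_succ (hind.card_le_finrank_add_one.lt_of_ne fun hcard => hzi ?_)).trans hN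
  let b : AffineBasis ι ℝ F :=
    ⟨y, hind, hind.affineSpan_eq_top_iff_card_eq_finrank_add_one.mpr hcard⟩
  exact interior_mono (convexHull_mono hys) (b.sum_smul_mem_interior_convexHull hw hw1)

end ConvexHull

theorem notMem_interior_of_isMaxOn_sub_snd {E : Type*} [PseudoMetricSpace E] {f : E → ℝ}
    {K : Set (E × ℝ)} {z : E × ℝ}
    (hz : IsMaxOn (fun z : E × ℝ => f z.1 - z.2) K z) : z ∉ interior K := by
  intro hzK
  obtain ⟨ε, hε, hball⟩ := Metric.mem_nhds_iff.mp (mem_interior_iff_mem_nhds.mp hzK)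
  have hlower : (z.1, z.2 - ε / 2) ∈ K := hball <| by
    simp [Prod.dist_eq, abs_of_pos hε]
    linarith
  have : f z.1 - (z.2 - ε / 2) ≤ f z.1 - z.2 := hz hlower
  linarith

section Ensemble

variable {E : Type*} [NormedAddCommGroup E] [NormedSpace ℝ E] {ι : Type*} [Fintype ι]

def ensemblePoint (f : E → ℝ) (p : ι → ℝ) (x : ι → E) : E × ℝ :=
  ∑ i, p i • (x i, f (x i))

def holevoFunctional (f : E → ℝ) (p : ι → ℝ) (x : ι → E) : ℝ :=
  f (∑ i, p i • x i) - ∑ i, p i * f (x i)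

theorem holevoFunctional_eq (f : E → ℝ) (p : ι → ℝ) (x : ι → E) :
    holevoFunctional f p x = f (ensemblePoint f p x).1 - (ensemblePoint f p x).2 := by
  simp [holevoFunctional, ensemblePoint, Prod.fst_sum, Prod.snd_sum]

theorem ensemblePoint_mem_convexHull_graphOn {f : E → ℝ} {D : Set E} {p : ι → ℝ}
    (hp : p ∈ stdSimplex ℝ ι) {x : ι → E} (hx : ∀ i, x i ∈ D) :
    ensemblePoint f p x ∈ convexHull ℝ (D.graphOn f) :=
  (convex_convexHull ℝ _).sum_mem (fun i _ => hp.1 i) hp.2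
    fun i _ => subset_convexHull ℝ _ ⟨x i, hx i, rfl⟩

theorem exists_fin_ensemblePoint_eq_of_notMem_interior [FiniteDimensional ℝ E] {f : E → ℝ}
    {D : Set E} {z : E × ℝ} (hz : z ∈ convexHull ℝ (D.graphOn f))
    (hzi : z ∉ interior (convexHull ℝ (D.graphOn f))) :
    ∃ (p : Fin (finrank ℝ E + 1) → ℝ) (x : Fin (finrank ℝ E + 1) → E),
      p ∈ stdSimplex ℝ _ ∧ (∀ i, x i ∈ D) ∧ ensemblePoint f p x = z := by
  obtain ⟨p, y, hp, hy, rfl⟩ := exists_fin_sum_smul_eq_of_notMem_interior_convexHull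
    (N := finrank ℝ E + 1) (by simp [finrank_prod]) hz hzi
  refine ⟨p, fun i => (y i).1, hp, fun i => (mem_graphOn.mp (hy i)).1, ?_⟩
  refine Finset.sum_congr rfl fun i _ => ?_
  rw [(mem_graphOn.mp (hy i)).2]

theorem exists_fin_ensemble_forall_holevoFunctional_le [FiniteDimensional ℝ E] {D : Set E}
    (hDconv : Convex ℝ D) (hDcomp : IsCompact D) (hDne : D.Nonempty) {f : E → ℝ}
    (hf : ContinuousOn f D) :
    ∃ (p : Fin (finrank ℝ E + 1) → ℝ) (x : Fin (finrank ℝ E + 1) → E),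
      p ∈ stdSimplex ℝ _ ∧ (∀ i, x i ∈ D) ∧
      ∀ {κ : Type*} [Fintype κ] (q : κ → ℝ) (y : κ → E), q ∈ stdSimplex ℝ κ → (∀ i, y i ∈ D) →
        holevoFunctional f q y ≤ holevoFunctional f p x := by
  set K := convexHull ℝ (D.graphOn f)
  have hKcomp : IsCompact K :=
    isCompact_convexHull (hDcomp.image_of_continuousOn (continuousOn_id.prodMk hf))
  have hKD : K ⊆ D ×ˢ univ := convexHull_min (fun z hz => ⟨(mem_graphOn.mp hz).1, trivial⟩)
    (hDconv.prod convex_univ)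
  have hobj : ContinuousOn (fun z : E × ℝ => f z.1 - z.2) K :=
    (hf.comp continuousOn_fst fun z hz => (hKD hz).1).sub continuousOn_snd
  obtain ⟨z, hzK, hmax⟩ :=
    hKcomp.exists_isMaxOn ((graphOn_nonempty.mpr hDne).mono (subset_convexHull ℝ _)) hobj
  obtain ⟨p, x, hp, hx, rfl⟩ :=
    exists_fin_ensemblePoint_eq_of_notMem_interior hzK (notMem_interior_of_isMaxOn_sub_snd hmax)
  refine ⟨p, x, hp, hx, fun q y hq hy => ?_⟩
  rw [holevoFunctional_eq, holevoFunctional_eq]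
  exact hmax (ensemblePoint_mem_convexHull_graphOn hq hy)

end Ensemble

theorem holevo_sup_attained_with_d_plus_one_points_general {d : ℕ} (D : Set (Fin d → ℝ))
    (hDconv : Convex ℝ D) (hDcomp : IsCompact D) (hDne : D.Nonempty)
    (f : (Fin d → ℝ) → ℝ) (hfcont : ContinuousOn f D) :
    ∃ (p : Fin (d + 1) → ℝ) (xs : Fin (d + 1) → (Fin d → ℝ)),
      (∀ i, 0 ≤ p i) ∧ (∑ i, p i = 1) ∧ (∀ i, xs i ∈ D) ∧
      ∀ (n : ℕ) (q : Fin n → ℝ) (ys : Fin n → (Fin d → ℝ)),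
        (∀ i, 0 ≤ q i) → (∑ i, q i = 1) → (∀ i, ys i ∈ D) →
        f (∑ i, q i • ys i) - ∑ i, q i * f (ys i) ≤
          f (∑ i, p i • xs i) - ∑ i, p i * f (xs i) := by
  have hmax := exists_fin_ensemble_forall_holevoFunctional_le hDconv hDcomp hDne hfcont
  rw [finrank_fin_fun] at hmax
  obtain ⟨p, xs, hp, hxs, hmax⟩ := hmax
  exact ⟨p, xs, hp.1, hp.2, hxs, fun n q ys hq hq1 hys => hmax q ys ⟨hq, hq1⟩ hys⟩

/-- For compact convex `D ⊆ ℝ^d` and continuous concave `f : D → ℝ`, the supremum over all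
finite ensembles of `f(∑ pᵢ xᵢ) - ∑ pᵢ f(xᵢ)` is attained by an ensemble with at most `d+1`
points. -/
theorem holevo_sup_attained_with_d_plus_one_points {d : ℕ} (D : Set (Fin d → ℝ))
    (hDconv : Convex ℝ D) (hDcomp : IsCompact D) (hDne : D.Nonempty)
    (f : (Fin d → ℝ) → ℝ) (hf : ConcaveOn ℝ D f) (hfcont : ContinuousOn f D) :
    ∃ (p : Fin (d + 1) → ℝ) (xs : Fin (d + 1) → (Fin d → ℝ)),
      (∀ i, 0 ≤ p i) ∧ (∑ i, p i = 1) ∧ (∀ i, xs i ∈ D) ∧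
      ∀ (n : ℕ) (q : Fin n → ℝ) (ys : Fin n → (Fin d → ℝ)),
        (∀ i, 0 ≤ q i) → (∑ i, q i = 1) → (∀ i, ys i ∈ D) →
        f (∑ i, q i • ys i) - ∑ i, q i * f (ys i) ≤
          f (∑ i, p i • xs i) - ∑ i, p i * f (xs i) :=
  holevo_sup_attained_with_d_plus_one_points_general D hDconv hDcomp hDne f hfcont
end

section
/- Let D ⊆ ℝ^d be compact convex, f : D → ℝ continuous and concave, and let F(x) = f(x) − conv f(x) where conv f is the greatest convex function majorized by f. A point x̃ ∈ D maximizes F if and only if there exists ξ ∈ ℝ^d such that for all x ∈ D: ξᵀ(x − x̃) + conv f(x̃) ≤ conv f(x) ≤ f(x) ≤ ξᵀ(x − x̃) + f(x̃). -/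
/-!
Write `M = f x̃ - conv f x̃`. If `x̃` maximizes `f - conv f`, the concave function `f - M` lies
below the convex function `conv f` on `D` and touches it at `x̃`. By the sandwich theorem some
affine function lies between them; it must pass through `(x̃, conv f x̃)`, and its slope is `ξ`.
The converse is immediate from the two inequalities.

The sandwich theorem for `h ≤ g` on `s` comes from a non-vertical hyperplane supporting the
convex set of `(x - y + u, t)` with `x, y ∈ s`, `t ≥ g x - h y` and `u` in a complement of the
direction of `s`. Adding the complement gives the set nonempty interior, while over the origin
it only contains points of nonnegative height, so the origin is not an interior point.
-/

open Matrix

section NonverticalSupport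

variable {E : Type*} {C : Set (E × ℝ)}

theorem affineSpan_eq_top_of_span_image_fst_eq_top [AddCommGroup E] [Module ℝ E]
    (hup : ∀ p ∈ C, ∀ t, p.2 ≤ t → (p.1, t) ∈ C)
    (hspan : Submodule.span ℝ (Prod.fst '' C) = ⊤) {t₀ : ℝ} (h₀ : ((0 : E), t₀) ∈ C) :
    affineSpan ℝ C = ⊤ := by
  rw [AffineSubspace.affineSpan_eq_top_iff_vectorSpan_eq_top_of_nonempty ℝ _ _ ⟨_, h₀⟩,
    eq_top_iff]
  set V := vectorSpan ℝ C
  have hvert : ((0 : E), (1 : ℝ)) ∈ V := by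
    simpa using vsub_mem_vectorSpan ℝ (hup _ h₀ (t₀ + 1) (by simp)) h₀
  have hhor : Submodule.span ℝ (Prod.fst '' C) ≤ V.comap (LinearMap.inl ℝ E ℝ) := by
    rw [Submodule.span_le]
    rintro _ ⟨p, hp, rfl⟩
    have hp' : (p.1, (0 : ℝ)) = (p -ᵥ ((0 : E), t₀)) - (p.2 - t₀) • ((0 : E), (1 : ℝ)) := by
      ext <;> simp
    simpa [hp'] using V.sub_mem (vsub_mem_vectorSpan ℝ hp h₀) (V.smul_mem (p.2 - t₀) hvert)
  rintro ⟨v, t⟩ -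
  have hv : (v, (0 : ℝ)) ∈ V := hhor (hspan ▸ Submodule.mem_top)
  simpa using V.add_mem hv (V.smul_mem t hvert)

theorem zero_notMem_interior_of_forall_nonneg_snd [TopologicalSpace E] [Zero E]
    (hvert : ∀ t, ((0 : E), t) ∈ C → 0 ≤ t) : (0 : E × ℝ) ∉ interior C := by
  intro h
  have hcont : Continuous fun t : ℝ => ((0 : E), t) := continuous_const.prodMk continuous_id
  have hev : ∀ᶠ t in nhdsWithin (0 : ℝ) (Set.Iio 0), ((0 : E), t) ∈ C :=
    nhdsWithin_le_nhds (hcont.tendsto 0 (mem_interior_iff_mem_nhds.1 h))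
  obtain ⟨t, ht, hneg⟩ := (hev.and self_mem_nhdsWithin).exists
  exact absurd (hvert t ht) (not_le.2 hneg)

theorem LinearMap.map_eq_map_fst_add_snd_mul {R : Type*} [CommSemiring R] [AddCommMonoid E]
    [Module R E] (φ : E × R →ₗ[R] R) (p : E × R) : φ p = φ (p.1, 0) + p.2 * φ (0, 1) := by
  rw [← smul_eq_mul, ← map_smul, ← map_add]
  congr 1
  ext <;> simp

theorem LinearMap.map_zero_one_neg_of_nonpos [AddCommGroup E] [Module ℝ E] {φ : E × ℝ →ₗ[ℝ] ℝ}
    (hφ0 : φ ≠ 0) (hφ : ∀ p ∈ C, φ p ≤ 0) (hne : C.Nonempty)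
    (hup : ∀ p ∈ C, ∀ t, p.2 ≤ t → (p.1, t) ∈ C) (hneg : ∀ p ∈ C, ∃ t, (-p.1, t) ∈ C)
    (hspan : Submodule.span ℝ (Prod.fst '' C) = ⊤) : φ (0, 1) < 0 := by
  have hdecomp := φ.map_eq_map_fst_add_snd_mul
  refine lt_of_le_of_ne ?_ fun hzero => hφ0 ?_
  · by_contra! hpos
    obtain ⟨p, hp⟩ := hne
    -- lifting `p` by `(1 - φ p) / φ (0, 1)` stays in `C` and raises `φ` to `1`
    have hs : 0 ≤ (1 - φ p) / φ (0, 1) := div_nonneg (by linarith [hφ p hp]) hpos.le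
    have := hφ _ (hup p hp _ (le_add_of_nonneg_right hs))
    rw [hdecomp, add_mul, div_mul_cancel₀ _ hpos.ne'] at this
    linarith [hdecomp p]
  have hhor : ∀ p ∈ C, φ (p.1, 0) ≤ 0 := fun p hp => by
    simpa [hdecomp p, hzero] using hφ p hp
  have hker : Submodule.span ℝ (Prod.fst '' C) ≤ LinearMap.ker (φ.comp (LinearMap.inl ℝ E ℝ)) := by
    rw [Submodule.span_le]
    rintro _ ⟨p, hp, rfl⟩
    obtain ⟨t, ht⟩ := hneg p hp
    have hmirror : φ (-p.1, 0) ≤ 0 := hhor _ ht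
    rw [← neg_zero, ← Prod.neg_mk, map_neg] at hmirror
    simp only [SetLike.mem_coe, LinearMap.mem_ker, LinearMap.coe_comp, Function.comp_apply,
      LinearMap.inl_apply]
    linarith [hhor p hp]
  ext v
  · simpa using hker (hspan ▸ Submodule.mem_top : v ∈ _)
  · simpa using hzero

theorem Convex.exists_linearMap_le_snd [NormedAddCommGroup E] [NormedSpace ℝ E]
    [FiniteDimensional ℝ E] (hC : Convex ℝ C) (hup : ∀ p ∈ C, ∀ t, p.2 ≤ t → (p.1, t) ∈ C)
    (hneg : ∀ p ∈ C, ∃ t, (-p.1, t) ∈ C) (hspan : Submodule.span ℝ (Prod.fst '' C) = ⊤)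
    (hvert : ∀ t, ((0 : E), t) ∈ C → 0 ≤ t) :
    ∃ L : E →ₗ[ℝ] ℝ, ∀ p ∈ C, L p.1 ≤ p.2 := by
  rcases C.eq_empty_or_nonempty with rfl | ⟨p₀, hp₀⟩
  · exact ⟨0, by simp⟩
  obtain ⟨t₁, ht₁⟩ := hneg p₀ hp₀
  have h₀ : ((0 : E), (p₀.2 + t₁) / 2) ∈ C := by
    convert hC hp₀ ht₁ (by norm_num : (0 : ℝ) ≤ 1 / 2) (by norm_num : (0 : ℝ) ≤ 1 / 2)
      (by norm_num) using 1
    ext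
    · simp
    · simp only [Prod.snd_add, Prod.smul_snd, smul_eq_mul]
      ring
  have hint : (interior C).Nonempty := hC.interior_nonempty_iff_affineSpan_eq_top.2
    (affineSpan_eq_top_of_span_image_fst_eq_top hup hspan h₀)
  obtain ⟨φ, hφne, hφ⟩ := geometric_hahn_banach_of_nonempty_interior_point hC
    (zero_notMem_interior_of_forall_nonneg_snd hvert) hint
  set ψ : E × ℝ →ₗ[ℝ] ℝ := ContinuousLinearMap.toLinearMap φ
  replace hφ : ∀ p ∈ C, ψ p ≤ 0 := fun p hp => (hφ p hp).trans_eq (map_zero φ)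
  have hslope := LinearMap.map_zero_one_neg_of_nonpos
    (ContinuousLinearMap.coe_injective.ne hφne) hφ ⟨p₀, hp₀⟩ hup hneg hspan
  refine ⟨(-ψ (0, 1))⁻¹ • ψ.comp (LinearMap.inl ℝ E ℝ), fun p hp => ?_⟩
  have := hφ p hp
  rw [ψ.map_eq_map_fst_add_snd_mul] at this
  simp only [LinearMap.smul_apply, LinearMap.coe_comp, Function.comp_apply, LinearMap.inl_apply,
    smul_eq_mul]
  rw [inv_mul_le_iff₀ (neg_pos.2 hslope)]
  linarith

end NonverticalSupport

section Sandwich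

variable {E : Type*} {s : Set E} {g h : E → ℝ}

theorem convex_setOf_sub_le [AddCommGroup E] [Module ℝ E] (hg : ConvexOn ℝ s g)
    (hh : ConcaveOn ℝ s h) (U : Submodule ℝ E) :
    Convex ℝ {p : E × ℝ | ∃ x ∈ s, ∃ y ∈ s, ∃ u ∈ U, p.1 = x - y + u ∧ g x - h y ≤ p.2} := by
  rintro p ⟨x, hx, y, hy, u, hu, hp₁, hp₂⟩ q ⟨x', hx', y', hy', u', hu', hq₁, hq₂⟩ a b ha hb hab
  refine ⟨a • x + b • x', hg.1 hx hx' ha hb hab, a • y + b • y', hh.1 hy hy' ha hb hab,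
    a • u + b • u', U.add_mem (U.smul_mem a hu) (U.smul_mem b hu'), ?_, ?_⟩
  · simp only [Prod.fst_add, Prod.smul_fst, hp₁, hq₁]
    module
  · have hgx := hg.2 hx hx' ha hb hab
    have hhy := hh.2 hy hy' ha hb hab
    simp only [smul_eq_mul, Prod.snd_add, Prod.smul_snd] at hgx hhy ⊢
    nlinarith [mul_le_mul_of_nonneg_left hp₂ ha, mul_le_mul_of_nonneg_left hq₂ hb]

theorem ConcaveOn.exists_affine_between [NormedAddCommGroup E] [NormedSpace ℝ E]
    [FiniteDimensional ℝ E] (hh : ConcaveOn ℝ s h) (hg : ConvexOn ℝ s g)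
    (hhg : ∀ x ∈ s, h x ≤ g x) :
    ∃ (L : E →ₗ[ℝ] ℝ) (c : ℝ), ∀ x ∈ s, h x ≤ L x + c ∧ L x + c ≤ g x := by
  rcases s.eq_empty_or_nonempty with rfl | ⟨x₀, hx₀⟩
  · exact ⟨0, 0, by simp⟩
  obtain ⟨U, hU⟩ := (vectorSpan ℝ s).exists_isCompl
  set C := {p : E × ℝ | ∃ x ∈ s, ∃ y ∈ s, ∃ u ∈ U, p.1 = x - y + u ∧ g x - h y ≤ p.2}
  have hspan : Submodule.span ℝ (Prod.fst '' C) = ⊤ := by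
    rw [eq_top_iff, ← hU.sup_eq_top, sup_le_iff, vectorSpan_def]
    constructor
    · refine Submodule.span_mono ?_
      rintro _ ⟨x, hx, y, hy, rfl⟩
      exact ⟨(x - y, g x - h y), ⟨x, hx, y, hy, 0, U.zero_mem, by simp, le_rfl⟩, rfl⟩
    · intro u hu
      exact Submodule.subset_span
        ⟨(u, g x₀ - h x₀), ⟨x₀, hx₀, x₀, hx₀, u, hu, by simp, le_rfl⟩, rfl⟩
  have hvert : ∀ t, ((0 : E), t) ∈ C → 0 ≤ t := by
    rintro t ⟨x, hx, y, hy, u, hu, h0, ht⟩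
    dsimp only at h0 ht
    have hxy : x - y ∈ vectorSpan ℝ s ⊓ U := ⟨vsub_mem_vectorSpan ℝ hx hy,
      by simpa [eq_neg_of_add_eq_zero_left h0.symm] using U.neg_mem hu⟩
    rw [hU.inf_eq_bot, Submodule.mem_bot, sub_eq_zero] at hxy
    subst hxy
    linarith [hhg x hx]
  obtain ⟨L, hL⟩ := Convex.exists_linearMap_le_snd (convex_setOf_sub_le hg hh U)
    (fun p ⟨x, hx, y, hy, u, hu, hp₁, hp₂⟩ t ht => ⟨x, hx, y, hy, u, hu, hp₁, hp₂.trans ht⟩)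
    (fun p ⟨x, hx, y, hy, u, hu, hp₁, _⟩ =>
      ⟨g y - h x, y, hy, x, hx, -u, U.neg_mem hu, by simp only [hp₁]; abel, le_rfl⟩)
    hspan hvert
  have hLxy : ∀ x ∈ s, ∀ y ∈ s, h y - L y ≤ g x - L x := fun x hx y hy => by
    have := hL (x - y, g x - h y) ⟨x, hx, y, hy, 0, U.zero_mem, by simp, le_rfl⟩
    rw [map_sub] at this
    linarith
  have : Nonempty s := ⟨⟨x₀, hx₀⟩⟩
  have hbdd : BddAbove (Set.range fun y : s => h y - L y) :=
    ⟨g x₀ - L x₀, by rintro _ ⟨y, rfl⟩; exact hLxy x₀ hx₀ y y.2⟩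
  refine ⟨L, ⨆ y : s, h y - L y, fun x hx => ⟨?_, ?_⟩⟩
  · linarith [le_ciSup hbdd ⟨x, hx⟩]
  · linarith [ciSup_le fun y : s => hLxy x hx y y.2]

end Sandwich

theorem maximizer_iff_supporting_hyperplane_general {d : ℕ} (D : Set (Fin d → ℝ))
    (f cg : (Fin d → ℝ) → ℝ) (hf : ConcaveOn ℝ D f)
    (hcgconv : ConvexOn ℝ D cg) (hcgle : ∀ x ∈ D, cg x ≤ f x)
    (xt : Fin d → ℝ) (hxt : xt ∈ D) :
    (∀ x ∈ D, f x - cg x ≤ f xt - cg xt) ↔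
      ∃ ξ : Fin d → ℝ, ∀ x ∈ D,
        ξ ⬝ᵥ (x - xt) + cg xt ≤ cg x ∧ cg x ≤ f x ∧ f x ≤ ξ ⬝ᵥ (x - xt) + f xt := by
  refine ⟨fun hmax => ?_, fun ⟨ξ, hξ⟩ x hx => ?_⟩
  · obtain ⟨L, c, hLc⟩ := ConcaveOn.exists_affine_between (h := fun x => f x + (cg xt - f xt))
      (hf.add_const _) hcgconv fun x hx => by linarith [hmax x hx]
    have hc : L xt + c = cg xt := le_antisymm (hLc xt hxt).2 (by linarith [(hLc xt hxt).1])
    refine ⟨(dotProductEquiv ℝ (Fin d)).symm L, fun x hx => ?_⟩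
    have hξ : ∀ v, (dotProductEquiv ℝ (Fin d)).symm L ⬝ᵥ v = L v := fun v => by
      rw [← dotProductEquiv_apply_apply, LinearEquiv.apply_symm_apply]
    rw [hξ, map_sub]
    obtain ⟨hlow, hup⟩ := hLc x hx
    exact ⟨by linarith, hcgle x hx, by linarith⟩
  · linarith [(hξ x hx).1, (hξ x hx).2.2, (hξ xt hxt).1, (hξ xt hxt).2.2]

/-- Supporting-hyperplane characterization of maximizers of `F(x) = f(x) - conv f(x)`, where
`cg = conv f` is the greatest convex function majorized by `f` on `D`:  `xt ∈ D` maximizes `F`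
iff there is `ξ ∈ ℝ^d` with
`ξᵀ(x - xt) + cg xt ≤ cg x ≤ f x ≤ ξᵀ(x - xt) + f xt` for all `x ∈ D`. -/
theorem maximizer_iff_supporting_hyperplane {d : ℕ} (D : Set (Fin d → ℝ))
    (hDconv : Convex ℝ D) (hDcomp : IsCompact D)
    (f cg : (Fin d → ℝ) → ℝ) (hf : ConcaveOn ℝ D f) (hfcont : ContinuousOn f D)
    (hcgconv : ConvexOn ℝ D cg) (hcgle : ∀ x ∈ D, cg x ≤ f x)
    (hcggreatest : ∀ h : (Fin d → ℝ) → ℝ, ConvexOn ℝ D h → (∀ x ∈ D, h x ≤ f x) →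
      ∀ x ∈ D, h x ≤ cg x)
    (xt : Fin d → ℝ) (hxt : xt ∈ D) :
    (∀ x ∈ D, f x - cg x ≤ f xt - cg xt) ↔
      ∃ ξ : Fin d → ℝ, ∀ x ∈ D,
        ξ ⬝ᵥ (x - xt) + cg xt ≤ cg x ∧ cg x ≤ f x ∧ f x ≤ ξ ⬝ᵥ (x - xt) + f xt :=
  maximizer_iff_supporting_hyperplane_general D f cg hf hcgconv hcgle xt hxt
end

section
/- If f : D → ℝ is strictly concave and continuous on a compact convex set D ⊆ ℝ^d, then the maximizer of x ↦ f(x) − conv f(x) satisfying the supporting-hyperplane optimality condition is unique. -/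
open BigOperators Matrix

/-- If `f` is strictly concave and continuous on a compact convex `D ⊆ ℝ^d`, then the point
satisfying the supporting-hyperplane optimality condition for `x ↦ f(x) - conv f(x)` is
unique (here `cg = conv f` is the greatest convex function majorized by `f` on `D`). -/
theorem unique_maximizer_of_strictConcave {d : ℕ} (D : Set (Fin d → ℝ))
    (hDconv : Convex ℝ D) (hDcomp : IsCompact D)
    (f cg : (Fin d → ℝ) → ℝ) (hf : StrictConcaveOn ℝ D f) (hfcont : ContinuousOn f D)
    (hcgconv : ConvexOn ℝ D cg) (hcgle : ∀ x ∈ D, cg x ≤ f x)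
    (hcggreatest : ∀ h : (Fin d → ℝ) → ℝ, ConvexOn ℝ D h → (∀ x ∈ D, h x ≤ f x) →
      ∀ x ∈ D, h x ≤ cg x)
    (xt₁ xt₂ : Fin d → ℝ) (hxt₁ : xt₁ ∈ D) (hxt₂ : xt₂ ∈ D)
    (ξ₁ ξ₂ : Fin d → ℝ)
    (h₁ : ∀ x ∈ D, ξ₁ ⬝ᵥ (x - xt₁) + cg xt₁ ≤ cg x ∧ cg x ≤ f x ∧
      f x ≤ ξ₁ ⬝ᵥ (x - xt₁) + f xt₁)
    (h₂ : ∀ x ∈ D, ξ₂ ⬝ᵥ (x - xt₂) + cg xt₂ ≤ cg x ∧ cg x ≤ f x ∧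
      f x ≤ ξ₂ ⬝ᵥ (x - xt₂) + f xt₂) :
    xt₁ = xt₂ := by
  by_contra hne
  set m : Fin d → ℝ := (1/2 : ℝ) • xt₁ + (1/2 : ℝ) • xt₂ with hm_def
  have hm : m ∈ D := hDconv hxt₁ hxt₂ (by norm_num) (by norm_num) (by norm_num)
  have hstrict : (1/2 : ℝ) * f xt₁ + (1/2 : ℝ) * f xt₂ < f m := by
    have := hf.2 hxt₁ hxt₂ hne (by norm_num : (0:ℝ) < 1/2) (by norm_num : (0:ℝ) < 1/2)
      (by norm_num)
    simpa [hm_def, smul_eq_mul, one_div] using this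
  have hA : ξ₁ ⬝ᵥ (xt₂ - xt₁) + cg xt₁ ≤ cg xt₂ := (h₁ xt₂ hxt₂).1
  have hB : ξ₂ ⬝ᵥ (xt₁ - xt₂) + cg xt₂ ≤ cg xt₁ := (h₂ xt₁ hxt₁).1
  have hm1 : m - xt₁ = (1/2 : ℝ) • (xt₂ - xt₁) := by
    funext i; simp [hm_def]; ring
  have hm2 : m - xt₂ = (1/2 : ℝ) • (xt₁ - xt₂) := by
    funext i; simp [hm_def]; ring
  have e1 : ξ₁ ⬝ᵥ (m - xt₁) = (1/2 : ℝ) * (ξ₁ ⬝ᵥ (xt₂ - xt₁)) := by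
    rw [hm1, dotProduct_smul]; simp [smul_eq_mul]
  have e2 : ξ₂ ⬝ᵥ (m - xt₂) = (1/2 : ℝ) * (ξ₂ ⬝ᵥ (xt₁ - xt₂)) := by
    rw [hm2, dotProduct_smul]; simp [smul_eq_mul]
  have l1 : f m ≤ ξ₁ ⬝ᵥ (m - xt₁) + f xt₁ := (h₁ m hm).2.2
  have l2 : f m ≤ ξ₂ ⬝ᵥ (m - xt₂) + f xt₂ := (h₂ m hm).2.2
  rw [e1] at l1
  rw [e2] at l2
  linarith
end

section
/- Suppose a qubit channel Γ satisfies S(Γ(ρ(x,y,z))) = S(Γ(ρ(x,−y,z))) for all (x,y,z) in the Bloch ball, and Γ maps the reflection ρ(x,y,z) ↦ ρ(x,−y,z) covariantly (i.e., reflecting all inputs across the x-z plane leaves the Holevo quantity of any ensemble unchanged). Let ρ₁, ρ₂ lie in the x-z plane (y=0) and ρ₃ = ρ(x₃,y₃,z₃) with y₃ ≠ 0, with probabilities π₁, π₂, π₃, and set ρ₄ = ρ(x₃,−y₃,z₃). If S(Γ(·)) is strictly concave, then the 4-point ensemble {(π₁,ρ₁),(π₂,ρ₂),(π₃/2,ρ₃),(π₃/2,ρ₄)}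 has strictly larger Holevo quantity than the 3-point ensemble {(π₁,ρ₁),(π₂,ρ₂),(π₃,ρ₃)}. -/
open Matrix Kronecker BigOperators
open scoped ComplexOrder

noncomputable def matLog2 {n : Type*} [Fintype n] [DecidableEq n] (A : Matrix n n ℂ) :
    Matrix n n ℂ :=
  if hA : A.IsHermitian then
    (hA.eigenvectorUnitary : Matrix n n ℂ) *
      Matrix.diagonal (fun i => (Real.logb 2 (hA.eigenvalues i) : ℂ)) *
      (star (hA.eigenvectorUnitary : Matrix n n ℂ))
  else 0

/-- von Neumann entropy (base 2): `S(A) = -Tr (A log₂ A)`. -/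
noncomputable def vnEntropy {n : Type*} [Fintype n] [DecidableEq n] (A : Matrix n n ℂ) : ℝ :=
  -((A * matLog2 A).trace).re

/-- Quantum relative entropy `H(ω,σ) = Tr ω (log₂ ω - log₂ σ)`. -/
noncomputable def relEnt {n : Type*} [Fintype n] [DecidableEq n] (ω σ : Matrix n n ℂ) : ℝ :=
  ((ω * (matLog2 ω - matLog2 σ)).trace).re

def IsDensityMatrix {n : Type*} [Fintype n] [DecidableEq n] (A : Matrix n n ℂ) : Prop :=
  A.PosSemidef ∧ A.trace = 1

/-- Holevo capacity: sup of `S(Γ(ρ̄)) - ∑ pᵢ S(Γ(ρᵢ))` over finite ensembles. -/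
noncomputable def holevoCap {n : Type*} [Fintype n] [DecidableEq n]
    (Γ : Matrix n n ℂ → Matrix n n ℂ) : ℝ :=
  sSup {c : ℝ | ∃ (m : ℕ) (p : Fin m → ℝ) (ρ : Fin m → Matrix n n ℂ),
    (∀ i, 0 ≤ p i) ∧ (∑ i, p i = 1) ∧ (∀ i, IsDensityMatrix (ρ i)) ∧
    c = vnEntropy (Γ (∑ i, p i • ρ i)) - ∑ i, p i * vnEntropy (Γ (ρ i))}

noncomputable def pauliX : Matrix (Fin 2) (Fin 2) ℂ := !![0, 1; 1, 0]
noncomputable def pauliY : Matrix (Fin 2) (Fin 2) ℂ := !![0, -Complex.I; Complex.I, 0]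
noncomputable def pauliZ : Matrix (Fin 2) (Fin 2) ℂ := !![1, 0; 0, -1]

/-- The Bloch representation `ρ(x,y,z) = ½(I + xσₓ + yσ_y + zσ_z)`. -/
noncomputable def blochMat (x y z : ℝ) : Matrix (Fin 2) (Fin 2) ℂ :=
  (1/2 : ℂ) • ((1 : Matrix (Fin 2) (Fin 2) ℂ) + (x : ℂ) • pauliX + (y : ℂ) • pauliY
    + (z : ℂ) • pauliZ)

/-- The (linear extension of the) qubit map acting on Bloch coordinates by
`(x,y,z) ↦ (λ₁x + t₁, λ₂y + t₂, λ₃z + t₃)`. -/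
noncomputable def qubitChan (l₁ l₂ l₃ t₁ t₂ t₃ : ℝ) (M : Matrix (Fin 2) (Fin 2) ℂ) :
    Matrix (Fin 2) (Fin 2) ℂ :=
  (1/2 : ℂ) • (M.trace • (1 : Matrix (Fin 2) (Fin 2) ℂ)
    + ((l₁ : ℂ) * (M * pauliX).trace + (t₁ : ℂ) * M.trace) • pauliX
    + ((l₂ : ℂ) * (M * pauliY).trace + (t₂ : ℂ) * M.trace) • pauliY
    + ((l₃ : ℂ) * (M * pauliZ).trace + (t₃ : ℂ) * M.trace) • pauliZ)

/-- The tensor product `Γ₁ ⊗ Γ₂` of two maps on matrices, acting on the Kronecker-product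
space, determined by `(Γ₁ ⊗ Γ₂)(A ⊗ₖ B) = Γ₁(A) ⊗ₖ Γ₂(B)` for linear `Γ₁, Γ₂`. -/
noncomputable def tensorMap {m n : Type*} [Fintype m] [DecidableEq m] [Fintype n] [DecidableEq n]
    (Γ₁ : Matrix m m ℂ → Matrix m m ℂ) (Γ₂ : Matrix n n ℂ → Matrix n n ℂ)
    (M : Matrix (m × n) (m × n) ℂ) : Matrix (m × n) (m × n) ℂ :=
  ∑ j : m, ∑ l : m,
    (Γ₁ (Matrix.single j l 1)) ⊗ₖ (Γ₂ (Matrix.of fun a b => M (j, a) (l, b)))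

/-- Partial trace over the first tensor factor. -/
noncomputable def ptrace1 {m n : Type*} [Fintype m] (X : Matrix (m × n) (m × n) ℂ) :
    Matrix n n ℂ :=
  Matrix.of fun i k => ∑ a : m, X (a, i) (a, k)

/-- Partial trace over the second tensor factor. -/
noncomputable def ptrace2 {m n : Type*} [Fintype n] (X : Matrix (m × n) (m × n) ℂ) :
    Matrix m m ℂ :=
  Matrix.of fun i k => ∑ a : n, X (i, a) (k, a)


/-! Reflecting every input across the x-z plane fixes `ρ₁, ρ₂` and swaps `ρ₃ ↔ ρ₄`, so by the
two symmetry hypotheses the averages `A = π₁ρ₁ + π₂ρ₂ + π₃ρ₃` and `B = π₁ρ₁ + π₂ρ₂ + π₃ρ₄` have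
the same output entropy, and `S(Γ ρ₃) = S(Γ ρ₄)`. The split ensemble has average `(A + B) / 2`
and the same mean output entropy of its members, while `A ≠ B` because `y₃ ≠ 0`; strict
concavity of `S ∘ Γ` then makes `S(Γ ((A + B) / 2))` strictly exceed `S(Γ A)`. -/

theorem bloch_form_nonneg {x y z s t p q : ℝ} (hr : x ^ 2 + y ^ 2 + z ^ 2 ≤ 1)
    (hpq : p ^ 2 + q ^ 2 = s * t) (hs : 0 ≤ s) (ht : 0 ≤ t) :
    0 ≤ s + t + z * (s - t) + 2 * (x * p + y * q) := by
  -- Cauchy–Schwarz against `(s - t, 2p, 2q)`, whose norm is `s + t` because `p² + q² = st`.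
  have hcs : (z * (s - t) + 2 * (x * p + y * q)) ^ 2 ≤ (s + t) ^ 2 := by
    nlinarith [sq_nonneg (x * (s - t) - 2 * z * p), sq_nonneg (y * (s - t) - 2 * z * q),
      sq_nonneg (x * q - y * p), sq_nonneg (s + t)]
  linarith [(abs_le_of_sq_le_sq' hcs (by positivity)).1]

theorem blochMat_isHermitian (x y z : ℝ) : (blochMat x y z).IsHermitian := by
  ext i j
  fin_cases i <;> fin_cases j <;>
    simp [blochMat, pauliX, pauliY, pauliZ, Complex.ext_iff] <;> ring

theorem blochMat_posSemidef {x y z : ℝ} (hr : x ^ 2 + y ^ 2 + z ^ 2 ≤ 1) :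
    (blochMat x y z).PosSemidef := by
  refine .of_dotProduct_mulVec_nonneg (blochMat_isHermitian x y z) fun v => ?_
  set a := v 0
  set b := v 1
  have hform : star v ⬝ᵥ (blochMat x y z *ᵥ v) =
      (((Complex.normSq a + Complex.normSq b + z * (Complex.normSq a - Complex.normSq b) +
        2 * (x * (a.re * b.re + a.im * b.im) + y * (a.re * b.im - a.im * b.re))) / 2 : ℝ) : ℂ) := by
    simp [blochMat, pauliX, pauliY, pauliZ, Matrix.mulVec, dotProduct, Fin.sum_univ_two,
      Complex.ext_iff, Complex.normSq_apply, a, b]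
    constructor <;> ring
  rw [hform, Complex.zero_le_real]
  have := bloch_form_nonneg hr (p := a.re * b.re + a.im * b.im) (q := a.re * b.im - a.im * b.re)
    (s := Complex.normSq a) (t := Complex.normSq b) (by simp only [Complex.normSq_apply]; ring)
    (Complex.normSq_nonneg a) (Complex.normSq_nonneg b)
  linarith

theorem isDensityMatrix_blochMat {x y z : ℝ} (hr : x ^ 2 + y ^ 2 + z ^ 2 ≤ 1) :
    IsDensityMatrix (blochMat x y z) := by
  refine ⟨blochMat_posSemidef hr, ?_⟩
  simp [blochMat, pauliX, pauliY, pauliZ, Matrix.trace, Fin.sum_univ_two]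
  ring

theorem blochMat_inj {x y z x' y' z' : ℝ} :
    blochMat x y z = blochMat x' y' z' ↔ x = x' ∧ y = y' ∧ z = z' := by
  refine ⟨fun h => ?_, by rintro ⟨rfl, rfl, rfl⟩; rfl⟩
  have h10 := congrFun (congrFun h 1) 0
  have h00 := congrFun (congrFun h 0) 0
  simp [blochMat, pauliX, pauliY, pauliZ, Complex.ext_iff] at h10 h00
  exact ⟨h10.1, h10.2, h00⟩

theorem convex_isDensityMatrix {n : Type*} [Fintype n] [DecidableEq n] :
    Convex ℝ {ρ : Matrix n n ℂ | IsDensityMatrix ρ} := by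
  intro ρ hρ σ hσ a b ha hb hab
  refine ⟨(hρ.1.smul ha).add (hσ.1.smul hb), ?_⟩
  rw [trace_add, trace_smul, trace_smul, hρ.2, hσ.2, ← add_smul, hab, one_smul]

theorem Convex.smul_add_smul_add_smul_mem {𝕜 E : Type*} [Field 𝕜] [LinearOrder 𝕜]
    [IsStrictOrderedRing 𝕜] [AddCommGroup E] [Module 𝕜 E] {s : Set E} (hs : Convex 𝕜 s)
    {x y z : E} (hx : x ∈ s) (hy : y ∈ s) (hz : z ∈ s) {a b c : 𝕜} (ha : 0 ≤ a) (hb : 0 ≤ b)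
    (hc : 0 ≤ c) (habc : a + b + c = 1) : a • x + b • y + c • z ∈ s := by
  have := hs.sum_mem (t := Finset.univ) (w := ![a, b, c]) (z := ![x, y, z])
    (by simp [Fin.forall_fin_succ, ha, hb, hc]) (by simp [Fin.sum_univ_three, habc])
    (by simp [Fin.forall_fin_succ, hx, hy, hz])
  simpa [Fin.sum_univ_three] using this

theorem StrictConcaveOn.apply_lt_apply_midpoint_of_apply_eq {𝕜 E β : Type*} [Field 𝕜]
    [LinearOrder 𝕜] [IsStrictOrderedRing 𝕜] [AddCommGroup E] [Module 𝕜 E]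
    [AddCommGroup β] [PartialOrder β] [IsOrderedAddMonoid β] [Module 𝕜 β]
    {s : Set E} {f : E → β} (hf : StrictConcaveOn 𝕜 s f) {x y : E} (hx : x ∈ s) (hy : y ∈ s)
    (hxy : x ≠ y) (hfxy : f x = f y) : f x < f ((2⁻¹ : 𝕜) • x + (2⁻¹ : 𝕜) • y) := by
  have := hf.2 hx hy hxy (by norm_num : (0 : 𝕜) < 2⁻¹) (by norm_num : (0 : 𝕜) < 2⁻¹)
    (by norm_num)
  rwa [← hfxy, ← add_smul, (by norm_num : (2⁻¹ : 𝕜) + 2⁻¹ = 1), one_smul] at this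

theorem splitting_reflected_pair_increases_holevo_general
    (Γ : Matrix (Fin 2) (Fin 2) ℂ → Matrix (Fin 2) (Fin 2) ℂ)
    (hsym : ∀ x y z : ℝ, x ^ 2 + y ^ 2 + z ^ 2 ≤ 1 →
      vnEntropy (Γ (blochMat x y z)) = vnEntropy (Γ (blochMat x (-y) z)))
    (hcov : ∀ (n : ℕ) (p : Fin n → ℝ) (v : Fin n → ℝ × ℝ × ℝ),
      (∀ i, 0 ≤ p i) → (∑ i, p i = 1) →
      (∀ i, (v i).1 ^ 2 + (v i).2.1 ^ 2 + (v i).2.2 ^ 2 ≤ 1) →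
      vnEntropy (Γ (∑ i, p i • blochMat (v i).1 (-(v i).2.1) (v i).2.2)) -
          ∑ i, p i * vnEntropy (Γ (blochMat (v i).1 (-(v i).2.1) (v i).2.2)) =
        vnEntropy (Γ (∑ i, p i • blochMat (v i).1 ((v i).2.1) (v i).2.2)) -
          ∑ i, p i * vnEntropy (Γ (blochMat (v i).1 ((v i).2.1) (v i).2.2)))
    (hstrict : StrictConcaveOn ℝ {ρ : Matrix (Fin 2) (Fin 2) ℂ | IsDensityMatrix ρ}
      (fun ρ => vnEntropy (Γ ρ)))
    (x₁ z₁ x₂ z₂ x₃ y₃ z₃ π₁ π₂ π₃ : ℝ)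
    (h₁ : x₁ ^ 2 + z₁ ^ 2 ≤ 1) (h₂ : x₂ ^ 2 + z₂ ^ 2 ≤ 1)
    (h₃ : x₃ ^ 2 + y₃ ^ 2 + z₃ ^ 2 ≤ 1) (hy₃ : y₃ ≠ 0)
    (hπ₁ : 0 < π₁) (hπ₂ : 0 < π₂) (hπ₃ : 0 < π₃) (hπ : π₁ + π₂ + π₃ = 1) :
    vnEntropy (Γ (π₁ • blochMat x₁ 0 z₁ + π₂ • blochMat x₂ 0 z₂ + π₃ • blochMat x₃ y₃ z₃)) -
        (π₁ * vnEntropy (Γ (blochMat x₁ 0 z₁)) + π₂ * vnEntropy (Γ (blochMat x₂ 0 z₂)) +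
          π₃ * vnEntropy (Γ (blochMat x₃ y₃ z₃))) <
      vnEntropy (Γ (π₁ • blochMat x₁ 0 z₁ + π₂ • blochMat x₂ 0 z₂ +
          (π₃ / 2) • blochMat x₃ y₃ z₃ + (π₃ / 2) • blochMat x₃ (-y₃) z₃)) -
        (π₁ * vnEntropy (Γ (blochMat x₁ 0 z₁)) + π₂ * vnEntropy (Γ (blochMat x₂ 0 z₂)) +
          (π₃ / 2) * vnEntropy (Γ (blochMat x₃ y₃ z₃)) +
          (π₃ / 2) * vnEntropy (Γ (blochMat x₃ (-y₃) z₃))) := by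
  have h₁' : x₁ ^ 2 + 0 ^ 2 + z₁ ^ 2 ≤ 1 := by simpa using h₁
  have h₂' : x₂ ^ 2 + 0 ^ 2 + z₂ ^ 2 ≤ 1 := by simpa using h₂
  have h₄ : x₃ ^ 2 + (-y₃) ^ 2 + z₃ ^ 2 ≤ 1 := by simpa using h₃
  set ρ₀ := π₁ • blochMat x₁ 0 z₁ + π₂ • blochMat x₂ 0 z₂
  have mem {y : ℝ} (hr : x₃ ^ 2 + y ^ 2 + z₃ ^ 2 ≤ 1) :
      ρ₀ + π₃ • blochMat x₃ y z₃ ∈ {ρ | IsDensityMatrix ρ} :=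
    convex_isDensityMatrix.smul_add_smul_add_smul_mem (isDensityMatrix_blochMat h₁')
      (isDensityMatrix_blochMat h₂') (isDensityMatrix_blochMat hr) hπ₁.le hπ₂.le hπ₃.le hπ
  have hS₃₄ := hsym x₃ y₃ z₃ h₃
  have hS_reflected : vnEntropy (Γ (ρ₀ + π₃ • blochMat x₃ (-y₃) z₃)) =
      vnEntropy (Γ (ρ₀ + π₃ • blochMat x₃ y₃ z₃)) := by
    have := hcov 3 ![π₁, π₂, π₃] ![(x₁, 0, z₁), (x₂, 0, z₂), (x₃, y₃, z₃)]
      (by simp [Fin.forall_fin_succ, hπ₁.le, hπ₂.le, hπ₃.le])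
      (by simp [Fin.sum_univ_three, hπ]) (by simp [Fin.forall_fin_succ, h₁, h₂, h₃])
    simp only [Fin.sum_univ_three, Matrix.cons_val_zero, Matrix.cons_val_one,
      Matrix.cons_val_two, Matrix.tail_cons, Matrix.head_cons, neg_zero, ← hS₃₄] at this
    linarith
  have hne : ρ₀ + π₃ • blochMat x₃ y₃ z₃ ≠ ρ₀ + π₃ • blochMat x₃ (-y₃) z₃ := by
    rw [Ne, add_right_inj, smul_right_inj hπ₃.ne', blochMat_inj]
    exact fun h => hy₃ (by linarith [h.2.1])
  have hmid := hstrict.apply_lt_apply_midpoint_of_apply_eq (mem h₃) (mem h₄) hne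
    hS_reflected.symm
  have hsplit : (2⁻¹ : ℝ) • (ρ₀ + π₃ • blochMat x₃ y₃ z₃) +
      (2⁻¹ : ℝ) • (ρ₀ + π₃ • blochMat x₃ (-y₃) z₃) =
      ρ₀ + (π₃ / 2) • blochMat x₃ y₃ z₃ + (π₃ / 2) • blochMat x₃ (-y₃) z₃ := by module
  rw [hsplit] at hmid
  rw [← hS₃₄]
  linarith

/-- For a channel with reflection symmetry across the x-z plane (equal output entropies for
reflected inputs, and Holevo quantity invariant under reflecting every input), if `ρ₁, ρ₂`
lie in the x-z plane and `ρ₃` has `y₃ ≠ 0`, and `S∘Γ` is strictly concave, then splitting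
`ρ₃` into the reflected pair `ρ₃, ρ₄` with halved probabilities strictly increases the
Holevo quantity. -/
theorem splitting_reflected_pair_increases_holevo
    (Γ : Matrix (Fin 2) (Fin 2) ℂ → Matrix (Fin 2) (Fin 2) ℂ)
    (hmap : ∀ ρ, IsDensityMatrix ρ → IsDensityMatrix (Γ ρ))
    (hsym : ∀ x y z : ℝ, x ^ 2 + y ^ 2 + z ^ 2 ≤ 1 →
      vnEntropy (Γ (blochMat x y z)) = vnEntropy (Γ (blochMat x (-y) z)))
    (hcov : ∀ (n : ℕ) (p : Fin n → ℝ) (v : Fin n → ℝ × ℝ × ℝ),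
      (∀ i, 0 ≤ p i) → (∑ i, p i = 1) →
      (∀ i, (v i).1 ^ 2 + (v i).2.1 ^ 2 + (v i).2.2 ^ 2 ≤ 1) →
      vnEntropy (Γ (∑ i, p i • blochMat (v i).1 (-(v i).2.1) (v i).2.2)) -
          ∑ i, p i * vnEntropy (Γ (blochMat (v i).1 (-(v i).2.1) (v i).2.2)) =
        vnEntropy (Γ (∑ i, p i • blochMat (v i).1 ((v i).2.1) (v i).2.2)) -
          ∑ i, p i * vnEntropy (Γ (blochMat (v i).1 ((v i).2.1) (v i).2.2)))
    (hstrict : StrictConcaveOn ℝ {ρ : Matrix (Fin 2) (Fin 2) ℂ | IsDensityMatrix ρ}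
      (fun ρ => vnEntropy (Γ ρ)))
    (x₁ z₁ x₂ z₂ x₃ y₃ z₃ π₁ π₂ π₃ : ℝ)
    (h₁ : x₁ ^ 2 + z₁ ^ 2 ≤ 1) (h₂ : x₂ ^ 2 + z₂ ^ 2 ≤ 1)
    (h₃ : x₃ ^ 2 + y₃ ^ 2 + z₃ ^ 2 ≤ 1) (hy₃ : y₃ ≠ 0)
    (hπ₁ : 0 < π₁) (hπ₂ : 0 < π₂) (hπ₃ : 0 < π₃) (hπ : π₁ + π₂ + π₃ = 1) :
    vnEntropy (Γ (π₁ • blochMat x₁ 0 z₁ + π₂ • blochMat x₂ 0 z₂ + π₃ • blochMat x₃ y₃ z₃)) -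
        (π₁ * vnEntropy (Γ (blochMat x₁ 0 z₁)) + π₂ * vnEntropy (Γ (blochMat x₂ 0 z₂)) +
          π₃ * vnEntropy (Γ (blochMat x₃ y₃ z₃))) <
      vnEntropy (Γ (π₁ • blochMat x₁ 0 z₁ + π₂ • blochMat x₂ 0 z₂ +
          (π₃ / 2) • blochMat x₃ y₃ z₃ + (π₃ / 2) • blochMat x₃ (-y₃) z₃)) -
        (π₁ * vnEntropy (Γ (blochMat x₁ 0 z₁)) + π₂ * vnEntropy (Γ (blochMat x₂ 0 z₂)) +
          (π₃ / 2) * vnEntropy (Γ (blochMat x₃ y₃ z₃)) +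
          (π₃ / 2) * vnEntropy (Γ (blochMat x₃ (-y₃) z₃))) :=
  splitting_reflected_pair_increases_holevo_general Γ hsym hcov hstrict x₁ z₁ x₂ z₂ x₃ y₃ z₃ π₁ π₂
    π₃ h₁ h₂ h₃ hy₃ hπ₁ hπ₂ hπ₃ hπ
end

section
/- If an ensemble {(π_i, ρ_i)} with all π_i > 0 achieves the Holevo capacity C(Γ) with average input ρ_Av = ∑_i π_i ρ_i, then H(Γ(ρ_i), Γ(ρ_Av)) = C(Γ) for every i. -/
open Matrix Kronecker BigOperators
open scoped ComplexOrder

/-!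
Write `σ = Γ(ρ_Av)` and `C = C(Γ)`. Since `S(ω) + H(ω, σ) = -Tr ω log σ` is affine in `ω`, the
average `∑ πᵢ H(Γ(ρᵢ), σ)` is the Holevo quantity of the ensemble, which is `C`. Conversely,
mixing any state `ρ'` into the optimal ensemble with weight `t` produces an ensemble with Holevo
quantity `C + t (H(Γ(ρ'), σ) - C) - H(σₜ, σ)`, where `σₜ = t Γ(ρ') + (1 - t) σ`. This is at most
`C`, and since `σ` is faithful, `H(σₜ, σ) = O(t²)` by a χ²-bound; letting `t → 0` gives
`H(Γ(ρ'), σ) ≤ C`. A positive average of numbers `≤ C` equal to `C` forces each of them to be `C`.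
-/

open Filter Topology

section

variable {n : Type*} [Fintype n] [DecidableEq n]

lemma Matrix.trace_diagonal_mul_diagonal_mul_star (W : Matrix n n ℂ) (g f : n → ℂ) :
    (diagonal g * W * diagonal f * star W).trace
      = ∑ k, ∑ j, g k * f j * Complex.normSq (W k j) := by
  refine Finset.sum_congr rfl fun k _ => ?_
  rw [diag, mul_apply]
  simp only [mul_diagonal, diagonal_mul, star_apply, RCLike.star_def]
  refine Finset.sum_congr rfl fun j _ => ?_
  rw [Complex.normSq_eq_conj_mul_self]
  ring

lemma Matrix.trace_conj_diagonal_mul_conj_diagonal (U V : Matrix n n ℂ) (g f : n → ℂ) :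
    (U * diagonal g * star U * (V * diagonal f * star V)).trace
      = ∑ k, ∑ j, g k * f j * Complex.normSq ((star U * V) k j) := by
  rw [← trace_diagonal_mul_diagonal_mul_star, star_mul, star_star,
    show U * diagonal g * star U * (V * diagonal f * star V)
      = U * (diagonal g * star U * V * diagonal f * star V) by simp only [Matrix.mul_assoc],
    trace_mul_comm]
  simp only [Matrix.mul_assoc]

lemma Matrix.normSq_apply_mem_doublyStochastic {W : Matrix n n ℂ} (hW : W ∈ unitaryGroup n ℂ) :
    Matrix.of (fun k j => Complex.normSq (W k j)) ∈ doublyStochastic ℝ n := by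
  have hrow (A : Matrix n n ℂ) (hA : A * star A = 1) (k : n) : ∑ j, Complex.normSq (A k j) = 1 := by
    have h := congrFun (congrFun hA k) k
    simp only [mul_apply, star_apply, RCLike.star_def, Complex.mul_conj, one_apply_eq] at h
    exact_mod_cast h
  refine mem_doublyStochastic_iff_sum.2 ⟨fun _ _ => Complex.normSq_nonneg _, hrow W
    (mem_unitaryGroup_iff.1 hW), fun j => ?_⟩
  simpa [star_apply] using hrow (star W) (by simpa using mem_unitaryGroup_iff'.1 hW) j

namespace Matrix.IsHermitian

variable {A B : Matrix n n ℂ} (hA : A.IsHermitian) (hB : B.IsHermitian)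

lemma eq_conj_diagonal :
    A = (hA.eigenvectorUnitary : Matrix n n ℂ) * diagonal (fun j => (hA.eigenvalues j : ℂ)) *
      star (hA.eigenvectorUnitary : Matrix n n ℂ) := by
  conv_lhs => rw [hA.spectral_theorem, Unitary.conjStarAlgAut_apply]
  rfl

lemma matLog2_eq :
    matLog2 A = (hA.eigenvectorUnitary : Matrix n n ℂ) *
      diagonal (fun j => (Real.logb 2 (hA.eigenvalues j) : ℂ)) *
      star (hA.eigenvectorUnitary : Matrix n n ℂ) :=
  dif_pos hA

noncomputable def overlap : Matrix n n ℝ :=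
  Matrix.of fun k j => Complex.normSq
    ((star (hA.eigenvectorUnitary : Matrix n n ℂ) * hB.eigenvectorUnitary) k j)

lemma overlap_mem_doublyStochastic : overlap hA hB ∈ doublyStochastic ℝ n :=
  normSq_apply_mem_doublyStochastic
    (mul_mem (Unitary.star_mem hA.eigenvectorUnitary.2) hB.eigenvectorUnitary.2)

lemma overlap_self : overlap hA hA = 1 := by
  ext k j
  simp [overlap, one_apply, apply_ite]

lemma re_trace_mul_conj_diagonal (f : n → ℝ) :
    (A * ((hB.eigenvectorUnitary : Matrix n n ℂ) * diagonal (fun j => (f j : ℂ)) *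
      star (hB.eigenvectorUnitary : Matrix n n ℂ))).trace.re
      = ∑ k, ∑ j, overlap hA hB k j * hA.eigenvalues k * f j := by
  conv_lhs => rw [hA.eq_conj_diagonal]
  rw [trace_conj_diagonal_mul_conj_diagonal]
  simp only [Complex.re_sum, overlap, of_apply]
  refine Finset.sum_congr rfl fun k _ => Finset.sum_congr rfl fun j _ => ?_
  norm_cast
  ring

lemma re_trace_mul_matLog2 :
    (A * matLog2 B).trace.re
      = ∑ k, ∑ j, overlap hA hB k j * hA.eigenvalues k * Real.logb 2 (hB.eigenvalues j) := by
  rw [hB.matLog2_eq, re_trace_mul_conj_diagonal]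

lemma re_trace_mul :
    (A * B).trace.re = ∑ k, ∑ j, overlap hA hB k j * hA.eigenvalues k * hB.eigenvalues j := by
  conv_lhs => rw [hB.eq_conj_diagonal]
  rw [re_trace_mul_conj_diagonal]

lemma re_trace_mul_self_matLog2 :
    (A * matLog2 A).trace.re = ∑ k, hA.eigenvalues k * Real.logb 2 (hA.eigenvalues k) := by
  simp [re_trace_mul_matLog2 hA hA, overlap_self, one_apply]

lemma re_trace_mul_self : (A * A).trace.re = ∑ k, hA.eigenvalues k ^ 2 := by
  simp [re_trace_mul hA hA, overlap_self, one_apply, sq]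

lemma vnEntropy_eq : vnEntropy A = (∑ k, Real.negMulLog (hA.eigenvalues k)) / Real.log 2 := by
  rw [vnEntropy, re_trace_mul_self_matLog2 hA, Finset.sum_div, ← Finset.sum_neg_distrib]
  simp only [Real.negMulLog, Real.logb, neg_mul, mul_div_assoc, neg_div]

lemma sum_overlap_mul_left (g : n → ℝ) : ∑ k, ∑ j, overlap hA hB k j * g k = ∑ k, g k := by
  simp [← Finset.sum_mul, sum_row_of_mem_doublyStochastic (overlap_mem_doublyStochastic hA hB)]

lemma sum_overlap_mul_right (f : n → ℝ) : ∑ k, ∑ j, overlap hA hB k j * f j = ∑ j, f j := by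
  rw [Finset.sum_comm]
  simp [← Finset.sum_mul, sum_col_of_mem_doublyStochastic (overlap_mem_doublyStochastic hA hB)]

lemma relEnt_eq_sum_overlap :
    relEnt A B = ∑ k, ∑ j, overlap hA hB k j * hA.eigenvalues k *
      (Real.logb 2 (hA.eigenvalues k) - Real.logb 2 (hB.eigenvalues j)) := by
  have h := sum_overlap_mul_left hA hB fun k => hA.eigenvalues k * Real.logb 2 (hA.eigenvalues k)
  rw [relEnt, Matrix.mul_sub, trace_sub, Complex.sub_re, re_trace_mul_self_matLog2 hA,
    re_trace_mul_matLog2 hA hB, ← h]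
  simp only [← Finset.sum_sub_distrib, mul_sub, mul_assoc]

lemma re_trace_sub_mul_sub :
    ((A - B) * (A - B)).trace.re
      = ∑ k, ∑ j, overlap hA hB k j * (hA.eigenvalues k - hB.eigenvalues j) ^ 2 := by
  have hAA := sum_overlap_mul_left hA hB fun k => hA.eigenvalues k ^ 2
  have hBB := sum_overlap_mul_right hA hB fun j => hB.eigenvalues j ^ 2
  have hBA : (B * A).trace.re = (A * B).trace.re := by rw [trace_mul_comm]
  rw [sub_mul, Matrix.mul_sub, Matrix.mul_sub, trace_sub, trace_sub, trace_sub, Complex.sub_re,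
    Complex.sub_re, Complex.sub_re, hBA, re_trace_mul_self hA, re_trace_mul_self hB,
    re_trace_mul hA hB, ← hAA, ← hBB]
  simp only [← Finset.sum_sub_distrib]
  refine Finset.sum_congr rfl fun k _ => Finset.sum_congr rfl fun j _ => ?_
  ring

end Matrix.IsHermitian

lemma Real.mul_log_sub_log_le {x y : ℝ} (hx : 0 ≤ x) (hy : 0 < y) :
    x * (Real.log x - Real.log y) ≤ (x - y) + (x - y) ^ 2 / y := by
  rcases hx.eq_or_lt with rfl | hx
  · simp [sq, hy.ne']
  calc x * (Real.log x - Real.log y) = x * Real.log (x / y) := by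
        rw [Real.log_div hx.ne' hy.ne']
    _ ≤ x * (x / y - 1) := by gcongr; exact Real.log_le_sub_one_of_pos (by positivity)
    _ = (x - y) + (x - y) ^ 2 / y := by field_simp; ring

lemma sum_mul_logb_sub_logb_le_of_mem_doublyStochastic {P : Matrix n n ℝ}
    (hP : P ∈ doublyStochastic ℝ n) {μ lam : n → ℝ} (hμ : ∀ k, 0 ≤ μ k)
    (hsum : ∑ k, μ k = ∑ j, lam j) {δ : ℝ} (hδ : 0 < δ) (hδlam : ∀ j, δ ≤ lam j) :
    ∑ k, ∑ j, P k j * μ k * (Real.logb 2 (μ k) - Real.logb 2 (lam j))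
      ≤ (∑ k, ∑ j, P k j * (μ k - lam j) ^ 2) / (δ * Real.log 2) := by
  have hlin : ∑ k, ∑ j, P k j * (μ k - lam j) = 0 := by
    simp only [mul_sub, Finset.sum_sub_distrib, ← Finset.sum_mul,
      sum_row_of_mem_doublyStochastic hP, one_mul]
    rw [Finset.sum_comm]
    simp only [← Finset.sum_mul, sum_col_of_mem_doublyStochastic hP, one_mul, hsum, sub_self]
  have hterm (k j : n) : P k j * μ k * (Real.logb 2 (μ k) - Real.logb 2 (lam j))
      ≤ (P k j * (μ k - lam j) + P k j * (μ k - lam j) ^ 2 / δ) / Real.log 2 := by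
    have hlam : 0 < lam j := hδ.trans_le (hδlam j)
    have hlog := Real.mul_log_sub_log_le (hμ k) hlam
    have hsq : (μ k - lam j) ^ 2 / lam j ≤ (μ k - lam j) ^ 2 / δ := by gcongr; exact hδlam j
    have hPkj := nonneg_of_mem_doublyStochastic hP (i := k) (j := j)
    rw [Real.logb, Real.logb, ← sub_div, mul_div_assoc']
    gcongr ?_ / _
    calc P k j * μ k * (Real.log (μ k) - Real.log (lam j))
        = P k j * (μ k * (Real.log (μ k) - Real.log (lam j))) := mul_assoc _ _ _
      _ ≤ P k j * ((μ k - lam j) + (μ k - lam j) ^ 2 / δ) := by gcongr; linarith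
      _ = P k j * (μ k - lam j) + P k j * (μ k - lam j) ^ 2 / δ := by ring
  calc ∑ k, ∑ j, P k j * μ k * (Real.logb 2 (μ k) - Real.logb 2 (lam j))
      ≤ ∑ k, ∑ j, (P k j * (μ k - lam j) + P k j * (μ k - lam j) ^ 2 / δ) / Real.log 2 := by
        gcongr with k _ j _; exact hterm k j
    _ = (∑ k, ∑ j, P k j * (μ k - lam j) ^ 2) / (δ * Real.log 2) := by
        simp only [← Finset.sum_div, Finset.sum_add_distrib, hlin, zero_add, div_div]

lemma relEnt_le_re_trace_sub_mul_sub_div {ρ σ : Matrix n n ℂ} (hρ : ρ.PosSemidef)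
    (hσ : σ.IsHermitian) (htr : ρ.trace = σ.trace) {δ : ℝ} (hδ : 0 < δ)
    (hδσ : ∀ j, δ ≤ hσ.eigenvalues j) :
    relEnt ρ σ ≤ ((ρ - σ) * (ρ - σ)).trace.re / (δ * Real.log 2) := by
  have hsum {A : Matrix n n ℂ} (hA : A.IsHermitian) : ∑ k, hA.eigenvalues k = A.trace.re := by
    simp [hA.trace_eq_sum_eigenvalues]
  rw [hρ.1.relEnt_eq_sum_overlap hσ, hρ.1.re_trace_sub_mul_sub hσ]
  exact sum_mul_logb_sub_logb_le_of_mem_doublyStochastic (hρ.1.overlap_mem_doublyStochastic hσ)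
    hρ.eigenvalues_nonneg (by rw [hsum, hsum, htr]) hδ hδσ

lemma Matrix.PosDef.exists_pos_le_eigenvalues {A : Matrix n n ℂ} (hA : A.PosDef) :
    ∃ δ > 0, ∀ j, δ ≤ hA.1.eigenvalues j := by
  have hsmall : ∀ᶠ δ in 𝓝[>] (0 : ℝ), ∀ j, δ ≤ hA.1.eigenvalues j :=
    Filter.eventually_all.2 fun j =>
      nhdsWithin_le_nhds (eventually_le_nhds (hA.eigenvalues_pos j))
  obtain ⟨δ, hle, hδ⟩ := (hsmall.and eventually_mem_nhdsWithin).exists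
  exact ⟨δ, hδ, hle⟩

lemma exists_relEnt_smul_add_smul_le {ω σ : Matrix n n ℂ} (hω : ω.PosSemidef) (hσ : σ.PosDef)
    (htr : ω.trace = σ.trace) :
    ∃ K, ∀ t ∈ Set.Icc (0 : ℝ) 1, relEnt (t • ω + (1 - t) • σ) σ ≤ t ^ 2 * K := by
  obtain ⟨δ, hδ, hδσ⟩ := hσ.exists_pos_le_eigenvalues
  refine ⟨((ω - σ) * (ω - σ)).trace.re / (δ * Real.log 2), fun t ⟨ht0, ht1⟩ => ?_⟩
  have hpsd : (t • ω + (1 - t) • σ).PosSemidef :=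
    (hω.smul ht0).add (hσ.posSemidef.smul (sub_nonneg.2 ht1))
  have htr' : (t • ω + (1 - t) • σ).trace = σ.trace := by
    rw [trace_add, trace_smul, trace_smul, htr, ← add_smul, add_sub_cancel, one_smul]
  have hdiff : t • ω + (1 - t) • σ - σ = t • (ω - σ) := by module
  calc relEnt (t • ω + (1 - t) • σ) σ
      ≤ ((t • (ω - σ)) * (t • (ω - σ))).trace.re / (δ * Real.log 2) := by
        simpa only [hdiff] using relEnt_le_re_trace_sub_mul_sub_div hpsd hσ.1 htr' hδ hδσ
    _ = t ^ 2 * (((ω - σ) * (ω - σ)).trace.re / (δ * Real.log 2)) := by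
        rw [smul_mul_smul, trace_smul, Complex.real_smul, Complex.re_ofReal_mul, mul_div_assoc,
          sq]

lemma IsDensityMatrix.sum_smul {ι : Type*} [Fintype ι] {p : ι → ℝ} {ρ : ι → Matrix n n ℂ}
    (hp : ∀ i, 0 ≤ p i) (hs : ∑ i, p i = 1) (hρ : ∀ i, IsDensityMatrix (ρ i)) :
    IsDensityMatrix (∑ i, p i • ρ i) := by
  refine ⟨posSemidef_sum _ fun i _ => (hρ i).1.smul (hp i), ?_⟩
  simp [trace_sum, trace_smul, fun i => (hρ i).2, ← Complex.ofReal_sum, hs]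

def IsAffineOnDensityMatrices (Γ : Matrix n n ℂ → Matrix n n ℂ) : Prop :=
  ∀ ρ σ, IsDensityMatrix ρ → IsDensityMatrix σ → ∀ t : ℝ, 0 ≤ t → t ≤ 1 →
    Γ (t • ρ + (1 - t) • σ) = t • Γ ρ + (1 - t) • Γ σ

lemma IsAffineOnDensityMatrices.map_sum_smul {Γ : Matrix n n ℂ → Matrix n n ℂ}
    (hΓ : IsAffineOnDensityMatrices Γ) {m : ℕ} {p : Fin m → ℝ} {ρ : Fin m → Matrix n n ℂ}
    (hp : ∀ i, 0 ≤ p i) (hs : ∑ i, p i = 1) (hρ : ∀ i, IsDensityMatrix (ρ i)) :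
    Γ (∑ i, p i • ρ i) = ∑ i, p i • Γ (ρ i) := by
  induction m with
  | zero => simp at hs
  | succ m ih =>
    rw [Fin.sum_univ_succ] at hs
    rw [Fin.sum_univ_succ, Fin.sum_univ_succ]
    have htail : ∑ i : Fin m, p i.succ = 1 - p 0 := by linarith
    rcases (Finset.sum_nonneg fun (i : Fin m) _ => hp i.succ).eq_or_lt' with h0 | hpos
    · have hz : ∀ i : Fin m, p i.succ = 0 := fun i =>
        (Finset.sum_eq_zero_iff_of_nonneg fun i _ => hp i.succ).1 h0 i (Finset.mem_univ _)
      have h1 : p 0 = 1 := by linarith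
      simp [hz, h1]
    rw [htail] at hpos
    set q : Fin m → ℝ := fun i => p i.succ / (1 - p 0)
    have hpq (i : Fin m) : p i.succ = (1 - p 0) * q i := (mul_div_cancel₀ _ hpos.ne').symm
    have hq : ∑ i, q i = 1 := by rw [← Finset.sum_div, htail, div_self hpos.ne']
    have hq0 (i : Fin m) : 0 ≤ q i := div_nonneg (hp i.succ) hpos.le
    simp only [hpq, mul_smul, ← Finset.smul_sum]
    rw [hΓ _ _ (hρ 0) (.sum_smul hq0 hq fun i => hρ i.succ) _ (hp 0) (by linarith),
      ih hq0 hq fun i => hρ i.succ]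

lemma Matrix.PosSemidef.vnEntropy_le {A : Matrix n n ℂ} (hA : A.PosSemidef) :
    vnEntropy A ≤ Fintype.card n / Real.log 2 := by
  rw [hA.1.vnEntropy_eq]
  gcongr
  calc ∑ k, Real.negMulLog (hA.1.eigenvalues k) ≤ ∑ _k : n, (1 : ℝ) :=
        Finset.sum_le_sum fun k _ => (Real.negMulLog_le_one_sub_self
          (hA.eigenvalues_nonneg k)).trans (by linarith [hA.eigenvalues_nonneg k])
    _ = Fintype.card n := by simp

lemma IsDensityMatrix.vnEntropy_nonneg {A : Matrix n n ℂ} (hA : IsDensityMatrix A) :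
    0 ≤ vnEntropy A := by
  have hsum : ∑ k, hA.1.1.eigenvalues k = 1 := by
    simpa [hA.2] using congrArg Complex.re hA.1.1.trace_eq_sum_eigenvalues.symm
  rw [hA.1.1.vnEntropy_eq]
  refine div_nonneg (Finset.sum_nonneg fun k _ => Real.negMulLog_nonneg
    (hA.1.eigenvalues_nonneg k) ?_) (Real.log_nonneg one_le_two)
  exact hsum ▸ Finset.single_le_sum (fun j _ => hA.1.eigenvalues_nonneg j) (Finset.mem_univ k)

noncomputable def holevoChi (Γ : Matrix n n ℂ → Matrix n n ℂ) {ι : Type*} [Fintype ι]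
    (p : ι → ℝ) (ρ : ι → Matrix n n ℂ) : ℝ :=
  vnEntropy (Γ (∑ i, p i • ρ i)) - ∑ i, p i * vnEntropy (Γ (ρ i))

lemma holevoChi_le_holevoCap {Γ : Matrix n n ℂ → Matrix n n ℂ}
    (hmap : ∀ ρ, IsDensityMatrix ρ → IsDensityMatrix (Γ ρ)) {m : ℕ} {p : Fin m → ℝ}
    {ρ : Fin m → Matrix n n ℂ} (hp : ∀ i, 0 ≤ p i) (hs : ∑ i, p i = 1)
    (hρ : ∀ i, IsDensityMatrix (ρ i)) :
    holevoChi Γ p ρ ≤ holevoCap Γ := by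
  refine le_csSup ⟨Fintype.card n / Real.log 2, ?_⟩ ⟨m, p, ρ, hp, hs, hρ, rfl⟩
  rintro _ ⟨m, p, ρ, hp, hs, hρ, rfl⟩
  have hmean := (hmap _ (.sum_smul hp hs hρ)).1.vnEntropy_le
  have hparts : 0 ≤ ∑ i, p i * vnEntropy (Γ (ρ i)) :=
    Finset.sum_nonneg fun i _ => mul_nonneg (hp i) (hmap _ (hρ i)).vnEntropy_nonneg
  linarith

lemma vnEntropy_add_relEnt (ω σ : Matrix n n ℂ) :
    vnEntropy ω + relEnt ω σ = -(ω * matLog2 σ).trace.re := by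
  simp only [vnEntropy, relEnt, Matrix.mul_sub, trace_sub, Complex.sub_re]
  ring

lemma vnEntropy_add_relEnt_sum_smul {ι : Type*} [Fintype ι] (p : ι → ℝ)
    (ω : ι → Matrix n n ℂ) (σ : Matrix n n ℂ) :
    vnEntropy (∑ i, p i • ω i) + relEnt (∑ i, p i • ω i) σ
      = ∑ i, p i * (vnEntropy (ω i) + relEnt (ω i) σ) := by
  simp only [vnEntropy_add_relEnt, Finset.sum_mul, smul_mul_assoc, trace_sum, trace_smul,
    Complex.re_sum, Complex.real_smul, Complex.re_ofReal_mul, Finset.sum_neg_distrib, mul_neg]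

lemma relEnt_self (σ : Matrix n n ℂ) : relEnt σ σ = 0 := by
  simp [relEnt]

lemma sum_mul_relEnt_sum_smul {ι : Type*} [Fintype ι] (p : ι → ℝ) (ω : ι → Matrix n n ℂ) :
    ∑ i, p i * relEnt (ω i) (∑ j, p j • ω j)
      = vnEntropy (∑ i, p i • ω i) - ∑ i, p i * vnEntropy (ω i) := by
  have h := vnEntropy_add_relEnt_sum_smul p ω (∑ j, p j • ω j)
  rw [relEnt_self, add_zero] at h
  simp only [h, mul_add, Finset.sum_add_distrib, add_sub_cancel_left]

lemma vnEntropy_smul_add_smul_sub_le_holevoCap {Γ : Matrix n n ℂ → Matrix n n ℂ}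
    (hmap : ∀ ρ, IsDensityMatrix ρ → IsDensityMatrix (Γ ρ)) (hΓ : IsAffineOnDensityMatrices Γ)
    {m : ℕ} {p : Fin m → ℝ} {ρ : Fin m → Matrix n n ℂ} (hp : ∀ i, 0 ≤ p i)
    (hs : ∑ i, p i = 1) (hρ : ∀ i, IsDensityMatrix (ρ i)) {ρ' : Matrix n n ℂ}
    (hρ' : IsDensityMatrix ρ') {t : ℝ} (ht0 : 0 ≤ t) (ht1 : t ≤ 1) :
    vnEntropy (t • Γ ρ' + (1 - t) • Γ (∑ i, p i • ρ i)) - t * vnEntropy (Γ ρ')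
      - (1 - t) * ∑ i, p i * vnEntropy (Γ (ρ i)) ≤ holevoCap Γ := by
  let p' : Fin (m + 1) → ℝ := Fin.cons t fun i => (1 - t) * p i
  let ρ'' : Fin (m + 1) → Matrix n n ℂ := Fin.cons ρ' ρ
  have hp' : ∀ i, 0 ≤ p' i := Fin.cases ht0 fun i => mul_nonneg (sub_nonneg.2 ht1) (hp i)
  have hs' : ∑ i, p' i = 1 := by simp [p', Fin.sum_cons, ← Finset.mul_sum, hs]
  have hρ'' : ∀ i, IsDensityMatrix (ρ'' i) := Fin.cases hρ' hρ
  have havg : ∑ i, p' i • ρ'' i = t • ρ' + (1 - t) • ∑ i, p i • ρ i := by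
    simp [p', ρ'', Fin.sum_univ_succ, Finset.smul_sum, mul_smul]
  have h := holevoChi_le_holevoCap hmap hp' hs' hρ''
  rw [holevoChi, havg, hΓ _ _ hρ' (.sum_smul hp hs hρ) t ht0 ht1] at h
  simpa [p', ρ'', Fin.sum_univ_succ, Finset.mul_sum, mul_assoc, sub_sub] using h

lemma le_of_forall_mem_Ioo_le_add_mul {a c K : ℝ} (h : ∀ t ∈ Set.Ioo (0 : ℝ) 1, a ≤ c + t * K) :
    a ≤ c := by
  have hlim : Tendsto (fun t => c + t * K) (𝓝[>] 0) (𝓝 c) := by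
    refine tendsto_nhdsWithin_of_tendsto_nhds ?_
    exact (show Continuous fun t : ℝ => c + t * K by fun_prop).tendsto' 0 c (by simp)
  exact ge_of_tendsto hlim (Filter.eventually_of_mem (Ioo_mem_nhdsGT one_pos) h)

lemma relEnt_le_holevoCap_of_holevoChi_eq {Γ : Matrix n n ℂ → Matrix n n ℂ}
    (hmap : ∀ ρ, IsDensityMatrix ρ → IsDensityMatrix (Γ ρ)) (hΓ : IsAffineOnDensityMatrices Γ)
    {m : ℕ} {p : Fin m → ℝ} {ρ : Fin m → Matrix n n ℂ} (hp : ∀ i, 0 ≤ p i)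
    (hs : ∑ i, p i = 1) (hρ : ∀ i, IsDensityMatrix (ρ i)) (hpd : (Γ (∑ i, p i • ρ i)).PosDef)
    (hopt : holevoChi Γ p ρ = holevoCap Γ) {ρ' : Matrix n n ℂ} (hρ' : IsDensityMatrix ρ') :
    relEnt (Γ ρ') (Γ (∑ i, p i • ρ i)) ≤ holevoCap Γ := by
  set σ := Γ (∑ i, p i • ρ i)
  set ω := Γ ρ'
  have hω := hmap _ hρ'
  have hσ := hmap _ (.sum_smul hp hs hρ)
  obtain ⟨K, hK⟩ := exists_relEnt_smul_add_smul_le hω.1 hpd (hω.2.trans hσ.2.symm)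
  refine le_of_forall_mem_Ioo_le_add_mul (K := K) fun t ⟨ht0, ht1⟩ => ?_
  have hχ := vnEntropy_smul_add_smul_sub_le_holevoCap hmap hΓ hp hs hρ hρ' ht0.le ht1.le
  have hsplit : vnEntropy (t • ω + (1 - t) • σ) + relEnt (t • ω + (1 - t) • σ) σ
      = t * (vnEntropy ω + relEnt ω σ) + (1 - t) * vnEntropy σ := by
    simpa [Fin.sum_univ_two, relEnt_self] using vnEntropy_add_relEnt_sum_smul ![t, 1 - t] ![ω, σ] σ
  have hsq := hK t ⟨ht0.le, ht1.le⟩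
  rw [holevoChi] at hopt
  have : t * relEnt ω σ ≤ t * (holevoCap Γ + t * K) := by nlinarith
  exact le_of_mul_le_mul_left this ht0

end

/-- If an ensemble with all `πᵢ > 0` achieves the Holevo capacity, then every optimal output
is "equidistant" from the optimal average output:
`H(Γ(ρᵢ), Γ(ρ_Av)) = C(Γ)` for every `i`. -/
theorem relEnt_to_optimal_average_eq_cap {d m : ℕ}
    (Γ : Matrix (Fin d) (Fin d) ℂ → Matrix (Fin d) (Fin d) ℂ)
    (hmap : ∀ ρ, IsDensityMatrix ρ → IsDensityMatrix (Γ ρ))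
    (haff : ∀ ρ σ, IsDensityMatrix ρ → IsDensityMatrix σ → ∀ t : ℝ, 0 ≤ t → t ≤ 1 →
      Γ (t • ρ + (1 - t) • σ) = t • Γ ρ + (1 - t) • Γ σ)
    (π : Fin m → ℝ) (ρs : Fin m → Matrix (Fin d) (Fin d) ℂ)
    (hπ : ∀ i, 0 < π i) (hπs : ∑ i, π i = 1) (hρs : ∀ i, IsDensityMatrix (ρs i))
    (hpd : (Γ (∑ i, π i • ρs i)).PosDef)
    (hopt : vnEntropy (Γ (∑ i, π i • ρs i)) - ∑ i, π i * vnEntropy (Γ (ρs i)) = holevoCap Γ) :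
    ∀ i, relEnt (Γ (ρs i)) (Γ (∑ i, π i • ρs i)) = holevoCap Γ := by
  intro i
  have hπ0 (j : Fin m) : 0 ≤ π j := (hπ j).le
  have hle (j : Fin m) : π j * relEnt (Γ (ρs j)) (Γ (∑ i, π i • ρs i)) ≤ π j * holevoCap Γ :=
    mul_le_mul_of_nonneg_left
      (relEnt_le_holevoCap_of_holevoChi_eq hmap haff hπ0 hπs hρs hpd hopt (hρs j)) (hπ0 j)
  have hmean : ∑ j, π j * relEnt (Γ (ρs j)) (Γ (∑ i, π i • ρs i)) = ∑ j, π j * holevoCap Γ := by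
    rw [← Finset.sum_mul, hπs, one_mul, ← hopt,
      IsAffineOnDensityMatrices.map_sum_smul haff hπ0 hπs hρs, sum_mul_relEnt_sum_smul]
  exact mul_left_cancel₀ (hπ i).ne'
    ((Finset.sum_eq_sum_iff_of_le fun j _ => hle j).1 hmean i (Finset.mem_univ i))
end

section
/- For the qubit channel Γ_μ(ρ(x,y,z)) = ρ(μx, μy, 0.5z) and the state |ψ⟩ = √p|00⟩ + √(1−p)|11⟩, the operator (Γ_μ ⊗ Γ_μ)(|ψ⟩⟨ψ|) has eigenvalues 3/16, 3/16, and (5 ± 4√(1 + (16μ⁴ − 4)p(1−p)))/16. -/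
open Matrix Kronecker BigOperators
open scoped ComplexOrder

/-- The vector `|ψ_p⟩ = √p |00⟩ + √(1-p) |11⟩` in ℂ²⊗ℂ². -/
noncomputable def psiP (p : ℝ) : Fin 2 × Fin 2 → ℂ := fun ij =>
  if ij.1 = 0 ∧ ij.2 = 0 then (Real.sqrt p : ℂ)
  else if ij.1 = 1 ∧ ij.2 = 1 then (Real.sqrt (1 - p) : ℂ) else 0

/-! In the basis `|00⟩, |01⟩, |10⟩, |11⟩` the output state is supported on the diagonal and the
antidiagonal: `|01⟩` and `|10⟩` are eigenvectors for `3/16`, and the block on `|00⟩, |11⟩` has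
trace `5/8` and determinant `(9 + 64 p(1-p))/256 - μ⁴ p(1-p)`, whose characteristic roots are
`(5 ± 4√(1 + (16μ⁴ - 4)p(1-p)))/16`. The eigenvalues of a Hermitian matrix are the roots of its
characteristic polynomial. -/

open Polynomial

theorem Matrix.IsHermitian.eigenvalues_eq_of_charpoly_eq {𝕜 n : Type*} [RCLike 𝕜] [Fintype n]
    [DecidableEq n] {A : Matrix n n 𝕜} (hA : A.IsHermitian) (s : Multiset ℝ)
    (h : A.charpoly = (s.map fun x : ℝ => X - C (x : 𝕜)).prod) :
    Finset.univ.val.map hA.eigenvalues = s := by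
  apply Multiset.map_injective (RCLike.ofReal_injective (K := 𝕜))
  rw [Multiset.map_map, ← hA.roots_charpoly_eq_eigenvalues, h]
  simpa [Multiset.map_map, Function.comp_def] using
    roots_multiset_prod_X_sub_C (s.map ((↑) : ℝ → 𝕜))

theorem Matrix.reindex_finProdFinEquiv_fin_two {α : Type*}
    (M : Matrix (Fin 2 × Fin 2) (Fin 2 × Fin 2) α) :
    reindex finProdFinEquiv finProdFinEquiv M =
      !![M (0, 0) (0, 0), M (0, 0) (0, 1), M (0, 0) (1, 0), M (0, 0) (1, 1);
        M (0, 1) (0, 0), M (0, 1) (0, 1), M (0, 1) (1, 0), M (0, 1) (1, 1);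
        M (1, 0) (0, 0), M (1, 0) (0, 1), M (1, 0) (1, 0), M (1, 0) (1, 1);
        M (1, 1) (0, 0), M (1, 1) (0, 1), M (1, 1) (1, 0), M (1, 1) (1, 1)] := by
  ext i j
  fin_cases i <;> fin_cases j <;> rfl

theorem Matrix.charpoly_fin_four_of_xShape {R : Type*} [CommRing R] (a b b' c d e : R) :
    (!![a, 0, 0, b; 0, c, 0, 0; 0, 0, d, 0; b', 0, 0, e] : Matrix (Fin 4) (Fin 4) R).charpoly =
      (X - C c) * (X - C d) * (X ^ 2 - C (a + e) * X + C (a * e - b * b')) := by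
  rw [charpoly, det_succ_row_zero]
  simp [Fin.sum_univ_succ, det_succ_row_zero, charmatrix_apply, submatrix, Fin.succAbove]
  ring

theorem Polynomial.X_sq_sub_C_mul_X_add_C_eq_mul {R : Type*} [CommRing R] {r₁ r₂ s t : R}
    (hs : r₁ + r₂ = s) (ht : r₁ * r₂ = t) :
    X ^ 2 - C s * X + C t = (X - C r₁) * (X - C r₂) := by
  subst hs ht
  simp only [map_add, map_mul]
  ring

theorem qubitChan_unital_apply (l l₃ : ℝ) (N : Matrix (Fin 2) (Fin 2) ℂ) :
    qubitChan l l l₃ 0 0 0 N =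
      !![((1 + l₃) * N 0 0 + (1 - l₃) * N 1 1) / 2, l * N 0 1;
        l * N 1 0, ((1 - l₃) * N 0 0 + (1 + l₃) * N 1 1) / 2] := by
  ext i k
  fin_cases i <;> fin_cases k <;>
    simp [qubitChan, pauliX, pauliY, pauliZ, trace, Fin.sum_univ_two, mul_apply] <;>
    ring_nf <;> simp only [Complex.I_sq] <;> ring

theorem reindex_tensorMap_qubitChan_psiP (μ p : ℝ) (hp0 : 0 ≤ p) (hp1 : p ≤ 1) :
    reindex finProdFinEquiv finProdFinEquiv
      (tensorMap (qubitChan μ μ (1 / 2) 0 0 0) (qubitChan μ μ (1 / 2) 0 0 0)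
        (vecMulVec (psiP p) (star (psiP p)))) =
    !![((1 + 8 * p) / 16 : ℂ), 0, 0, μ ^ 2 * √(p * (1 - p));
      0, 3 / 16, 0, 0;
      0, 0, 3 / 16, 0;
      μ ^ 2 * √(p * (1 - p)), 0, 0, (9 - 8 * p) / 16] := by
  have hu : (√p : ℂ) * √p = p := by exact_mod_cast Real.mul_self_sqrt hp0
  have hv : (√(1 - p) : ℂ) * √(1 - p) = 1 - p := by
    exact_mod_cast Real.mul_self_sqrt (sub_nonneg.2 hp1)
  rw [reindex_finProdFinEquiv_fin_two, Real.sqrt_mul hp0]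
  simp [tensorMap, qubitChan_unital_apply, psiP, vecMulVec_apply, Fin.sum_univ_two, single_apply,
    hu, hv]
  refine ⟨⟨?_, ?_⟩, ?_, ?_, ?_, ?_⟩ <;> ring

theorem eigenvalues_of_product_channel_output_general (μ p : ℝ)
    (hp0 : 0 ≤ p) (hp1 : p ≤ 1)
    (hM : (tensorMap (qubitChan μ μ (1 / 2) 0 0 0) (qubitChan μ μ (1 / 2) 0 0 0)
      (Matrix.vecMulVec (psiP p) (star (psiP p)))).IsHermitian) :
    Multiset.map hM.eigenvalues Finset.univ.val =
      ({3 / 16, 3 / 16,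
        (5 + 4 * Real.sqrt (1 + (16 * μ ^ 4 - 4) * p * (1 - p))) / 16,
        (5 - 4 * Real.sqrt (1 + (16 * μ ^ 4 - 4) * p * (1 - p))) / 16} : Multiset ℝ) := by
  have hq : (√(p * (1 - p)) : ℂ) ^ 2 = p * (1 - p) := by
    exact_mod_cast Real.sq_sqrt (mul_nonneg hp0 (sub_nonneg.2 hp1))
  have hD : (√(1 + (16 * μ ^ 4 - 4) * p * (1 - p)) : ℂ) ^ 2 =
      1 + (16 * μ ^ 4 - 4) * p * (1 - p) := by
    refine mod_cast Real.sq_sqrt ?_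
    -- the radicand is `(1 - 2p)² + 16 μ⁴ p(1-p)`
    nlinarith [sq_nonneg (1 - 2 * p),
      mul_nonneg (pow_nonneg (sq_nonneg μ) 2) (mul_nonneg hp0 (sub_nonneg.2 hp1))]
  set r := √(1 + (16 * μ ^ 4 - 4) * p * (1 - p))
  apply hM.eigenvalues_eq_of_charpoly_eq
  rw [← charpoly_reindex finProdFinEquiv, reindex_tensorMap_qubitChan_psiP μ p hp0 hp1,
    charpoly_fin_four_of_xShape,
    X_sq_sub_C_mul_X_add_C_eq_mul (r₁ := (5 + 4 * r : ℂ) / 16) (r₂ := (5 - 4 * r : ℂ) / 16)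
      (by ring) (by linear_combination (-1 / 16 : ℂ) * hD + μ ^ 4 * hq)]
  simp [mul_assoc]

/-- For `Γ_μ(ρ(x,y,z)) = ρ(μx, μy, z/2)` and `|ψ⟩ = √p|00⟩ + √(1-p)|11⟩`, the operator
`(Γ_μ ⊗ Γ_μ)(|ψ⟩⟨ψ|)` has eigenvalues `3/16, 3/16, (5 ± 4√(1+(16μ⁴-4)p(1-p)))/16`. -/
theorem eigenvalues_of_product_channel_output (μ p : ℝ) (hμ0 : 0 ≤ μ) (hμ : μ ≤ 3 / 4)
    (hp0 : 0 ≤ p) (hp1 : p ≤ 1)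
    (hM : (tensorMap (qubitChan μ μ (1 / 2) 0 0 0) (qubitChan μ μ (1 / 2) 0 0 0)
      (Matrix.vecMulVec (psiP p) (star (psiP p)))).IsHermitian) :
    Multiset.map hM.eigenvalues Finset.univ.val =
      ({3 / 16, 3 / 16,
        (5 + 4 * Real.sqrt (1 + (16 * μ ^ 4 - 4) * p * (1 - p))) / 16,
        (5 - 4 * Real.sqrt (1 + (16 * μ ^ 4 - 4) * p * (1 - p))) / 16} : Multiset ℝ) :=
  eigenvalues_of_product_channel_output_general μ p hp0 hp1 hM
end
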